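/- In the Hecke algebra H_{n,q}, the element y_n := ([n]_{1/q}!)⁻¹ · Σ_{w ∈ S_n} (-q)^{-ℓ(w)} T_w is an idempotent, provided q is invertible and [n]_{1/q}! is invertible in K. -/

import Mathlib

/-- The Coxeter length of a permutation of `Fin n` (its number of inversions). -/
def permLen {n : ℕ} (w : Equiv.Perm (Fin n)) : ℕ :=
  (Finset.univ.filter fun p : Fin n × Fin n => p.1 < p.2 ∧ w p.2 < w p.1).card

/-- q-integer `[m]_q = 1 + q + ⋯ + q^{m-1}`. -/
def qnat {K : Type*} [Semiring K] (q : K) (m : ℕ) : K := ∑ i ∈ Finset.range m, q ^ i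

/-- q-factorial `[m]_q! = [1]_q [2]_q ⋯ [m]_q`. -/
def qfact {K : Type*} [CommSemiring K] (q : K) (m : ℕ) : K :=
  ∏ i ∈ Finset.range m, qnat q (i + 1)

/-!
Write `e = ∑_w (-q)⁻¹^ℓ(w) T_w`. For an adjacent transposition `s`, pairing each `w` having an
ascent at `s` with `ws` factors `e` as `x (1 - q⁻¹ T_s)`, and the quadratic relation
`T_s² = (q - 1) T_s + q` gives `(1 - q⁻¹ T_s) T_s = -(1 - q⁻¹ T_s)`. Hence `e T_s = -e`, so
`e T_w = (-1)^ℓ(w) e` by induction on `ℓ(w)`, and `e² = (∑_w q⁻¹^ℓ(w)) e`. This Poincaré polynomial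
is `[n]_{1/q}!`: a permutation of `n + 1` letters is a permutation of `n` letters with a value `k`
inserted in the last position, which adds exactly `n - k` inversions.
-/

open Equiv Finset

section Inversions

variable {n : ℕ}

def inversions (w : Perm (Fin n)) : Finset (Fin n × Fin n) :=
  univ.filter fun p => p.1 < p.2 ∧ w p.2 < w p.1

lemma card_inversions (w : Perm (Fin n)) : #(inversions w) = permLen w := rfl

lemma mem_inversions {w : Perm (Fin n)} {p : Fin n × Fin n} :
    p ∈ inversions w ↔ p.1 < p.2 ∧ w p.2 < w p.1 := by
  simp [inversions]

lemma lt_of_val_add_one_eq {i j : Fin n} (hij : (i : ℕ) + 1 = j) : i < j :=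
  Fin.lt_def.mpr (by omega)

@[simp]
lemma permLen_one : permLen (1 : Perm (Fin n)) = 0 :=
  card_eq_zero.mpr <| filter_eq_empty_iff.mpr fun _ _ h => lt_asymm h.1 h.2

lemma swap_lt_swap_of_adjacent {i j a b : Fin n} (hij : (i : ℕ) + 1 = j) (hab : a < b)
    (hne : ¬(a = i ∧ b = j)) : swap i j a < swap i j b := by
  rw [Fin.lt_def] at hab ⊢
  rw [Fin.ext_iff, Fin.ext_iff] at hne
  simp only [swap_apply_def]
  split_ifs <;> simp only [Fin.ext_iff] at * <;> omega

lemma erase_inversions_mul_swap {i j : Fin n} (hij : (i : ℕ) + 1 = j) {w : Perm (Fin n)}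
    (hw : w i < w j) :
    (inversions (w * swap i j)).erase (i, j) =
      (inversions w).map ((swap i j).toEmbedding.prodMap (swap i j).toEmbedding) := by
  ext ⟨a, b⟩
  simp only [mem_erase, mem_map, mem_inversions, Prod.exists, Function.Embedding.prodMap,
    Function.Embedding.coeFn_mk, Prod.map_apply, Perm.mul_apply, Prod.mk.injEq, ne_eq]
  constructor
  · rintro ⟨hne, hab, hinv⟩
    exact ⟨swap i j a, swap i j b, ⟨swap_lt_swap_of_adjacent hij hab hne, hinv⟩,
      swap_apply_self .., swap_apply_self ..⟩
  · rintro ⟨c, d, ⟨hcd, hinv⟩, rfl, rfl⟩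
    refine ⟨?_, swap_lt_swap_of_adjacent hij hcd ?_, by simpa using hinv⟩
    · rintro ⟨hc, hd⟩
      rw [swap_apply_eq_iff, swap_apply_left] at hc
      rw [swap_apply_eq_iff, swap_apply_right] at hd
      exact absurd (hc ▸ hd ▸ hcd) (lt_of_val_add_one_eq hij).not_gt
    · rintro ⟨rfl, rfl⟩
      exact hw.not_gt hinv

lemma permLen_mul_swap_of_lt {i j : Fin n} (hij : (i : ℕ) + 1 = j) {w : Perm (Fin n)}
    (hw : w i < w j) : permLen (w * swap i j) = permLen w + 1 := by
  have hmem : (i, j) ∈ inversions (w * swap i j) := by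
    rw [mem_inversions]
    exact ⟨lt_of_val_add_one_eq hij, by simpa using hw⟩
  rw [← card_inversions, ← card_erase_add_one hmem, erase_inversions_mul_swap hij hw, card_map,
    card_inversions]

lemma permLen_mul_swap_of_gt {i j : Fin n} (hij : (i : ℕ) + 1 = j) {w : Perm (Fin n)}
    (hw : w j < w i) : permLen w = permLen (w * swap i j) + 1 := by
  have h := permLen_mul_swap_of_lt (w := w * swap i j) hij (by simpa using hw)
  rwa [mul_swap_mul_self] at h

lemma exists_adjacent_descent_of_ne_one {w : Perm (Fin n)} (hw : w ≠ 1) :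
    ∃ i j : Fin n, (i : ℕ) + 1 = j ∧ w j < w i := by
  cases n with
  | zero => exact absurd (Subsingleton.elim w 1) hw
  | succ m =>
    by_contra! hasc
    have hmono : StrictMono w := Fin.strictMono_iff_lt_succ.mpr fun i =>
      (hasc _ _ rfl).lt_of_ne (w.injective.ne (Fin.castSucc_lt_succ (i := i)).ne)
    exact hw (Equiv.ext (congrFun hmono.eq_id))

end Inversions

section Insertion

variable {n : ℕ}

lemma card_filter_inversions_snd_eq_last (w : Perm (Fin (n + 1))) :
    #{p ∈ inversions w | p.2 = Fin.last n} = n - w (Fin.last n) := by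
  have hfilter : {p ∈ inversions w | p.2 = Fin.last n} =
      (Ioi (w (Fin.last n))).image fun y => (w.symm y, Fin.last n) := by
    ext ⟨a, b⟩
    simp only [mem_filter, mem_inversions, mem_image, mem_Ioi, Prod.mk.injEq]
    constructor
    · rintro ⟨⟨-, hinv⟩, rfl⟩
      exact ⟨w a, hinv, by simp, rfl⟩
    · rintro ⟨y, hy, rfl, rfl⟩
      refine ⟨⟨?_, by simpa using hy⟩, rfl⟩
      exact (Fin.le_last _).lt_of_ne fun h => by simp [← h] at hy
  rw [hfilter, card_image_of_injective _ fun y z h => w.symm.injective (congrArg Prod.fst h),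
    Fin.card_Ioi, Nat.add_sub_cancel]

def permSnoc (k : Fin (n + 1)) (e : Perm (Fin n)) : Perm (Fin (n + 1)) :=
  (finSuccEquiv' (Fin.last n)).trans ((optionCongr e).trans (finSuccEquiv' k).symm)

@[simp]
lemma permSnoc_last (k : Fin (n + 1)) (e : Perm (Fin n)) : permSnoc k e (Fin.last n) = k := by
  simp [permSnoc, finSuccEquiv'_at, finSuccEquiv'_symm_none]

@[simp]
lemma permSnoc_castSucc (k : Fin (n + 1)) (e : Perm (Fin n)) (x : Fin n) :
    permSnoc k e x.castSucc = k.succAbove (e x) := by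
  have h : finSuccEquiv' (Fin.last n) x.castSucc = some x := by
    rw [← Fin.succAbove_last_apply, finSuccEquiv'_succAbove]
  simp [permSnoc, h, finSuccEquiv'_symm_some]

lemma filter_inversions_permSnoc_snd_ne_last (k : Fin (n + 1)) (e : Perm (Fin n)) :
    {p ∈ inversions (permSnoc k e) | p.2 ≠ Fin.last n} =
      (inversions e).map (Fin.castSuccEmb.prodMap Fin.castSuccEmb) := by
  ext ⟨a, b⟩
  simp only [mem_filter, mem_inversions, mem_map, Prod.exists, Function.Embedding.prodMap,
    Function.Embedding.coeFn_mk, Prod.map_apply, Fin.coe_castSuccEmb, Prod.mk.injEq]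
  constructor
  · rintro ⟨⟨hab, hinv⟩, hb⟩
    obtain ⟨d, rfl⟩ := Fin.exists_castSucc_eq.mpr hb
    obtain ⟨c, rfl⟩ := Fin.exists_castSucc_eq.mpr (hab.trans (Fin.castSucc_lt_last d)).ne
    rw [permSnoc_castSucc, permSnoc_castSucc, Fin.succAbove_lt_succAbove_iff] at hinv
    exact ⟨c, d, ⟨Fin.castSucc_lt_castSucc_iff.mp hab, hinv⟩, rfl, rfl⟩
  · rintro ⟨c, d, ⟨hcd, hinv⟩, rfl, rfl⟩
    refine ⟨⟨Fin.castSucc_lt_castSucc_iff.mpr hcd, ?_⟩, (Fin.castSucc_lt_last d).ne⟩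
    rwa [permSnoc_castSucc, permSnoc_castSucc, Fin.succAbove_lt_succAbove_iff]

lemma permLen_permSnoc (k : Fin (n + 1)) (e : Perm (Fin n)) :
    permLen (permSnoc k e) = (n - k) + permLen e := by
  rw [← card_inversions, ← card_filter_add_card_filter_not (·.2 = Fin.last n),
    card_filter_inversions_snd_eq_last, permSnoc_last, filter_inversions_permSnoc_snd_ne_last,
    card_map, card_inversions]

lemma permSnoc_bijective :
    Function.Bijective fun p : Fin (n + 1) × Perm (Fin n) => permSnoc p.1 p.2 := by
  rw [Fintype.bijective_iff_injective_and_card]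
  refine ⟨fun ⟨k, e⟩ ⟨k', e'⟩ h => ?_, by simp [Fintype.card_perm, Nat.factorial_succ]⟩
  have hk : k = k' := by simpa using congrArg (· (Fin.last n)) h
  subst hk
  have he : e = e' := Equiv.ext fun x => Fin.succAbove_right_injective (p := k) <| by
    simpa using congrArg (· x.castSucc) h
  rw [he]

theorem sum_pow_permLen {R : Type*} [CommSemiring R] (x : R) (n : ℕ) :
    ∑ w : Perm (Fin n), x ^ permLen w = qfact x n := by
  induction n with
  | zero => simp [qfact, permLen]
  | succ n ih =>
    have hqnat : ∑ k : Fin (n + 1), x ^ (n - k : ℕ) = qnat x (n + 1) := by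
      rw [Fin.sum_univ_eq_sum_range (fun i => x ^ (n - i)), qnat]
      simpa using sum_range_reflect (fun i => x ^ i) (n + 1)
    rw [← Fintype.sum_bijective _ permSnoc_bijective _ _ fun _ => rfl, Fintype.sum_prod_type]
    simp only [permLen_permSnoc, pow_add]
    rw [← sum_mul_sum, hqnat, ih, qfact, qfact, prod_range_succ, mul_comm]

end Insertion

section Hecke

variable {K : Type*} [Field K] {A : Type*} [Ring A] [Algebra K A] {n : ℕ}

def HeckeMulRule (q : K) (T : Perm (Fin n) → A) : Prop :=
  ∀ (w : Perm (Fin n)) (i j : Fin n), (i : ℕ) + 1 = j →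
    T w * T (swap i j) =
      if permLen (w * swap i j) = permLen w + 1 then T (w * swap i j)
      else (q - 1) • T w + q • T (w * swap i j)

def antisymmetrizer (q : K) (T : Perm (Fin n) → A) : A :=
  ∑ w, ((-q)⁻¹) ^ permLen w • T w

variable {q : K} {T : Perm (Fin n) → A} {i j : Fin n} {w : Perm (Fin n)}

lemma HeckeMulRule.mul_swap_of_lt (hT : HeckeMulRule q T) (hij : (i : ℕ) + 1 = j)
    (hw : w i < w j) : T w * T (swap i j) = T (w * swap i j) := by
  rw [hT w i j hij, if_pos (permLen_mul_swap_of_lt hij hw)]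

lemma HeckeMulRule.mul_swap_of_gt (hT : HeckeMulRule q T) (hij : (i : ℕ) + 1 = j)
    (hw : w j < w i) : T w * T (swap i j) = (q - 1) • T w + q • T (w * swap i j) := by
  have hlen := permLen_mul_swap_of_gt hij hw
  rw [hT w i j hij, if_neg (by omega)]

lemma HeckeMulRule.swap_mul_self (hT : HeckeMulRule q T) (hone : T 1 = 1)
    (hij : (i : ℕ) + 1 = j) : T (swap i j) * T (swap i j) = (q - 1) • T (swap i j) + q • 1 := by
  rw [hT.mul_swap_of_gt hij (by simpa using lt_of_val_add_one_eq hij), Equiv.swap_mul_self, hone]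

lemma sum_perm_eq_sum_filter_lt_add {M : Type*} [AddCommMonoid M] (f : Perm (Fin n) → M)
    (hij : i ≠ j) : ∑ w, f w = ∑ w with w i < w j, (f w + f (w * swap i j)) := by
  rw [sum_add_distrib, ← sum_filter_add_sum_filter_not univ fun w => w i < w j]
  congr 1
  refine sum_nbij' (· * swap i j) (· * swap i j) ?_ ?_ ?_ ?_ ?_ <;>
    simp only [mem_filter, mem_univ, true_and, Perm.mul_apply, swap_apply_left,
      swap_apply_right, mul_swap_mul_self, not_lt, implies_true]
  · exact fun w hw => hw.lt_of_ne (w.injective.ne hij.symm)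
  · exact fun w hw => hw.le

lemma antisymmetrizer_mul_T_swap (hq : q ≠ 0) (hone : T 1 = 1) (hT : HeckeMulRule q T)
    (hij : (i : ℕ) + 1 = j) : antisymmetrizer q T * T (swap i j) = -antisymmetrizer q T := by
  set P : A := 1 - q⁻¹ • T (swap i j)
  have hP : P * T (swap i j) = -P := by
    rw [sub_mul, one_mul, smul_mul_assoc, hT.swap_mul_self hone hij, smul_add, smul_smul,
      smul_smul, inv_mul_cancel₀ hq, mul_sub, inv_mul_cancel₀ hq]
    module
  have hpair : ∀ w : Perm (Fin n), w i < w j →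
      ((-q)⁻¹) ^ permLen w • T w + ((-q)⁻¹) ^ permLen (w * swap i j) • T (w * swap i j) =
        (((-q)⁻¹) ^ permLen w • T w) * P := by
    intro w hw
    rw [permLen_mul_swap_of_lt hij hw, ← hT.mul_swap_of_lt hij hw, pow_succ, inv_neg]
    simp only [P, mul_sub, mul_one, mul_smul_comm, smul_mul_assoc]
    module
  have hfactor : antisymmetrizer q T = (∑ w with w i < w j, ((-q)⁻¹) ^ permLen w • T w) * P := by
    rw [antisymmetrizer, sum_perm_eq_sum_filter_lt_add _ (lt_of_val_add_one_eq hij).ne, sum_mul]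
    exact sum_congr rfl fun w hw => hpair w (mem_filter.mp hw).2
  rw [hfactor, mul_assoc, hP, mul_neg]

lemma antisymmetrizer_mul_T (hq : q ≠ 0) (hone : T 1 = 1) (hT : HeckeMulRule q T)
    (w : Perm (Fin n)) :
    antisymmetrizer q T * T w = (-1 : K) ^ permLen w • antisymmetrizer q T := by
  by_cases hw : w = 1
  · subst hw
    rw [hone, mul_one, permLen_one, pow_zero, one_smul]
  obtain ⟨i, j, hij, hdesc⟩ := exists_adjacent_descent_of_ne_one hw
  have hlen := permLen_mul_swap_of_gt hij hdesc
  have hTw : T w = T (w * swap i j) * T (swap i j) := by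
    rw [hT.mul_swap_of_lt hij (by simpa using hdesc), mul_swap_mul_self]
  rw [hTw, ← mul_assoc, antisymmetrizer_mul_T hq hone hT (w * swap i j), smul_mul_assoc,
    antisymmetrizer_mul_T_swap hq hone hT hij, hlen, pow_succ, mul_neg_one, neg_smul, smul_neg]
termination_by permLen w
decreasing_by omega

lemma antisymmetrizer_mul_self (hq : q ≠ 0) (hone : T 1 = 1) (hT : HeckeMulRule q T) :
    antisymmetrizer q T * antisymmetrizer q T = qfact q⁻¹ n • antisymmetrizer q T :=
  calc antisymmetrizer q T * antisymmetrizer q T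
      = ∑ w, ((-q)⁻¹) ^ permLen w • (antisymmetrizer q T * T w) := by
        nth_rw 2 [antisymmetrizer]
        simp only [mul_sum, mul_smul_comm]
    _ = ∑ w : Perm (Fin n), q⁻¹ ^ permLen w • antisymmetrizer q T := by
        refine sum_congr rfl fun w _ => ?_
        rw [antisymmetrizer_mul_T hq hone hT, smul_smul, ← mul_pow, inv_neg, neg_mul_neg, mul_one]
    _ = qfact q⁻¹ n • antisymmetrizer q T := by rw [← sum_smul, sum_pow_permLen]

end Hecke

theorem stmt_3_general {K : Type*} [Field K] (q : K) (hq0 : q ≠ 0) (n : ℕ)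
    {A : Type*} [Ring A] [Algebra K A]
    (T : Equiv.Perm (Fin n) → A)
    (hone : T 1 = 1)
    (hmul : ∀ (w : Equiv.Perm (Fin n)) (i j : Fin n), (i : ℕ) + 1 = j →
      T w * T (Equiv.swap i j) =
        if permLen (w * Equiv.swap i j) = permLen w + 1 then T (w * Equiv.swap i j)
        else (q - 1) • T w + q • T (w * Equiv.swap i j)) :
    ((qfact q⁻¹ n)⁻¹ • ∑ w : Equiv.Perm (Fin n), ((-q)⁻¹) ^ permLen w • T w) *
        ((qfact q⁻¹ n)⁻¹ • ∑ w : Equiv.Perm (Fin n), ((-q)⁻¹) ^ permLen w • T w) =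
      (qfact q⁻¹ n)⁻¹ • ∑ w : Equiv.Perm (Fin n), ((-q)⁻¹) ^ permLen w • T w := by
  change (qfact q⁻¹ n)⁻¹ • antisymmetrizer q T * (qfact q⁻¹ n)⁻¹ • antisymmetrizer q T =
    (qfact q⁻¹ n)⁻¹ • antisymmetrizer q T
  rw [smul_mul_smul_comm, antisymmetrizer_mul_self hq0 hone hmul, smul_smul]
  congr 1
  field_simp

/-- in the Hecke algebra `H_{n,q}` — modelled as an algebra `A` with a
basis `{T_w : w ∈ S_n}` satisfying `T_1 = 1` and the usual multiplication rule —
the element `y_n = ([n]_{1/q}!)⁻¹ Σ_w (-q)^{-ℓ(w)} T_w` is an idempotent,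
provided `q` and `[n]_{1/q}!` are invertible. -/
theorem stmt_3 {K : Type*} [Field K] (q : K) (hq0 : q ≠ 0) (n : ℕ)
    {A : Type*} [Ring A] [Algebra K A]
    (T : Equiv.Perm (Fin n) → A)
    (hbasis : LinearIndependent K T)
    (hone : T 1 = 1)
    (hmul : ∀ (w : Equiv.Perm (Fin n)) (i j : Fin n), (i : ℕ) + 1 = j →
      T w * T (Equiv.swap i j) =
        if permLen (w * Equiv.swap i j) = permLen w + 1 then T (w * Equiv.swap i j)
        else (q - 1) • T w + q • T (w * Equiv.swap i j))
    (hfact : qfact q⁻¹ n ≠ 0) :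
    ((qfact q⁻¹ n)⁻¹ • ∑ w : Equiv.Perm (Fin n), ((-q)⁻¹) ^ permLen w • T w) *
        ((qfact q⁻¹ n)⁻¹ • ∑ w : Equiv.Perm (Fin n), ((-q)⁻¹) ^ permLen w • T w) =
      (qfact q⁻¹ n)⁻¹ • ∑ w : Equiv.Perm (Fin n), ((-q)⁻¹) ^ permLen w • T w :=
  stmt_3_general q hq0 n T hone hmul
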